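/- Let A be strictly positive self-adjoint (so 0 ∈ ρ(−A)), τ ∈ B(D(A),X) with Range τ′ ∩ H′ = {0}, and Θ a symmetric operator from X′ to X with bounded everywhere-defined inverse. Then the operator defined by (A_Θ^τ)^{-1} := A^{-1} + G∘Θ^{-1}∘Ğ, with G := G(0), Ğ := Ğ(0), is self-adjoint; and if ℓ(Θℓ) ≥ 0 for all ℓ then A_Θ^τ is strictly positive. -/
import Mathlib


open scoped ComplexConjugate InnerProductSpace

/-- `G := G(0) = C_H⁻¹ ∘ Ğ(0)′` with `Ğ := Ğ(0) = τ ∘ A⁻¹` (`R0 = A⁻¹`). -/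
noncomputable def G0
    {H : Type*} [NormedAddCommGroup H] [InnerProductSpace ℂ H] [CompleteSpace H]
    {D : Type*} [NormedAddCommGroup D] [NormedSpace ℂ D]
    {X : Type*} [NormedAddCommGroup X] [NormedSpace ℂ X]
    (R0 : H →L[ℂ] D) (τ : D →L[ℂ] X) (ℓ : X →L[ℂ] ℂ) : H :=
  (InnerProductSpace.toDual ℂ H).symm (ℓ.comp (τ.comp R0))

/-- The inverse operator `B := (A_Θ^τ)⁻¹ = A⁻¹ + G ∘ Θ⁻¹ ∘ Ğ` (`Λ = Θ⁻¹`). -/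
noncomputable def Bop
    {H : Type*} [NormedAddCommGroup H] [InnerProductSpace ℂ H] [CompleteSpace H]
    {D : Type*} [NormedAddCommGroup D] [NormedSpace ℂ D]
    {X : Type*} [NormedAddCommGroup X] [NormedSpace ℂ X]
    (R0 : H →L[ℂ] D) (ι : D →L[ℂ] H) (τ : D →L[ℂ] X)
    (Λ : X → (X →L[ℂ] ℂ)) (φ : H) : H :=
  ι (R0 φ) + G0 R0 τ (Λ (τ (R0 φ)))

/-- **Example 3.2, Birman–Kreĭn–Vishik variant.** Let `A` be strictly
positive self-adjoint (so `0 ∈ ρ(−A)`, `R0 = A⁻¹`), `τ ∈ B(D(A),X)` with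
`Range τ′ ∩ H′ = {0}`, and `Θ` symmetric from `X′` to `X` with bounded
everywhere-defined inverse `Λ`.  Then `B := A⁻¹ + G∘Θ⁻¹∘Ğ` is symmetric, injective
and has dense range — i.e. `A_Θ^τ := B⁻¹` is self-adjoint; and if `ℓ(Θℓ) ≥ 0` for
all `ℓ` then `A_Θ^τ` is strictly positive. -/
theorem stmt18
    {H : Type*} [NormedAddCommGroup H] [InnerProductSpace ℂ H] [CompleteSpace H]
    {D : Type*} [NormedAddCommGroup D] [NormedSpace ℂ D]
    {X : Type*} [NormedAddCommGroup X] [NormedSpace ℂ X]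
    (R0 : H →L[ℂ] D) (ι : D →L[ℂ] H) (τ : D →L[ℂ] X)
    (hιinj : Function.Injective ι) (hιdense : DenseRange ι)
    (hR0surj : Function.Surjective R0) (hR0inj : Function.Injective R0)
    -- A = (ι ∘ R0)⁻¹ is self-adjoint ...
    (hsa : ContinuousLinearMap.adjoint (ι.comp R0) = ι.comp R0)
    -- ... and strictly positive: ⟨d, A d⟩ ≥ c ‖d‖²
    (hpos : ∃ c > 0, ∀ φ : H, c * ‖ι (R0 φ)‖ ^ 2 ≤ (⟪ι (R0 φ), φ⟫_ℂ).re)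
    -- (h2): Range τ′ ∩ H′ = {0}
    (h2 : ∀ (ℓ : X →L[ℂ] ℂ) (φ : H), (∀ d : D, ℓ (τ d) = ⟪φ, ι d⟫_ℂ) → φ = 0)
    -- Θ symmetric, with bounded everywhere-defined inverse Λ
    (Θ : (X →L[ℂ] ℂ) → X)
    (hΘsymm : ∀ ℓ₁ ℓ₂ : X →L[ℂ] ℂ, ℓ₁ (Θ ℓ₂) = conj (ℓ₂ (Θ ℓ₁)))
    (Λ : X → (X →L[ℂ] ℂ)) (hΛcont : Continuous Λ)
    (hΛright : ∀ x : X, Θ (Λ x) = x) (hΛleft : ∀ ℓ : X →L[ℂ] ℂ, Λ (Θ ℓ) = ℓ) :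
    -- B is symmetric ...
    (∀ φ ψ : H, ⟪Bop R0 ι τ Λ φ, ψ⟫_ℂ = ⟪φ, Bop R0 ι τ Λ ψ⟫_ℂ) ∧
    -- ... injective with dense range, i.e. A_Θ^τ = B⁻¹ is self-adjoint ...
    Function.Injective (Bop R0 ι τ Λ) ∧
    Dense (Set.range (Bop R0 ι τ Λ)) ∧
    -- ... and strictly positive when Θ is positive
    ((∀ ℓ : X →L[ℂ] ℂ, 0 ≤ (ℓ (Θ ℓ)).re) →
      ∃ c > 0, ∀ φ : H, c * ‖Bop R0 ι τ Λ φ‖ ^ 2 ≤ (⟪φ, Bop R0 ι τ Λ φ⟫_ℂ).re) := by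
  classical
  have hG0 : ∀ (ℓ : X →L[ℂ] ℂ) (ψ : H), ⟪G0 R0 τ ℓ, ψ⟫_ℂ = ℓ (τ (R0 ψ)) := by
    intro ℓ ψ
    simp [G0, InnerProductSpace.toDual_symm_apply]
  have hTsym : ∀ φ ψ : H, ⟪ι (R0 φ), ψ⟫_ℂ = ⟪φ, ι (R0 ψ)⟫_ℂ := by
    intro φ ψ
    have : ⟪(ι.comp R0) φ, ψ⟫_ℂ = ⟪φ, (ι.comp R0) ψ⟫_ℂ := by
      conv_lhs => rw [← hsa]
      exact ContinuousLinearMap.adjoint_inner_left _ _ _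
    simpa using this
  have hΛsym : ∀ x y : X, Λ x y = conj (Λ y x) := by
    intro x y
    calc Λ x y = Λ x (Θ (Λ y)) := by rw [hΛright]
    _ = conj (Λ y (Θ (Λ x))) := hΘsymm _ _
    _ = conj (Λ y x) := by rw [hΛright]
  -- separation in X
  have hsep : ∀ a b : X, (∀ ℓ : X →L[ℂ] ℂ, ℓ a = ℓ b) → a = b := by
    intro a b hab
    exact (NormedSpace.eq_iff_forall_dual_eq ℂ).2 hab
  -- Θ and Λ are conjugate-linear
  have hΘadd : ∀ ℓ₁ ℓ₂ : X →L[ℂ] ℂ, Θ (ℓ₁ + ℓ₂) = Θ ℓ₁ + Θ ℓ₂ := by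
    intro ℓ₁ ℓ₂
    refine hsep _ _ fun ℓ => ?_
    rw [hΘsymm ℓ (ℓ₁ + ℓ₂)]
    simp only [ContinuousLinearMap.add_apply, map_add, hΘsymm ℓ ℓ₁, hΘsymm ℓ ℓ₂]
  have hΘsmul : ∀ (c : ℂ) (ℓ' : X →L[ℂ] ℂ), Θ (c • ℓ') = conj c • Θ ℓ' := by
    intro c ℓ'
    refine hsep _ _ fun ℓ => ?_
    rw [hΘsymm ℓ (c • ℓ')]
    simp only [ContinuousLinearMap.smul_apply, map_smul, smul_eq_mul, map_mul,
      hΘsymm ℓ ℓ']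
    try ring_nf
    try simp [mul_comm]
  have hΛadd : ∀ x y : X, Λ (x + y) = Λ x + Λ y := by
    intro x y
    have : Θ (Λ x + Λ y) = x + y := by rw [hΘadd, hΛright, hΛright]
    calc Λ (x + y) = Λ (Θ (Λ x + Λ y)) := by rw [this]
    _ = Λ x + Λ y := hΛleft _
  have hΛsmul : ∀ (c : ℂ) (x : X), Λ (c • x) = conj c • Λ x := by
    intro c x
    have : Θ (conj c • Λ x) = c • x := by
      rw [hΘsmul, Complex.conj_conj, hΛright]
    calc Λ (c • x) = Λ (Θ (conj c • Λ x)) := by rw [this]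
    _ = conj c • Λ x := hΛleft _
  -- precomposition operator
  set C : H →L[ℂ] X := τ.comp R0 with hCdef
  -- B as a continuous linear map
  have hBadd : ∀ φ ψ : H, Bop R0 ι τ Λ (φ + ψ) = Bop R0 ι τ Λ φ + Bop R0 ι τ Λ ψ := by
    intro φ ψ
    simp only [Bop, G0, map_add, hΛadd, ContinuousLinearMap.add_comp]
    abel
  have hBsmul : ∀ (c : ℂ) (φ : H), Bop R0 ι τ Λ (c • φ) = c • Bop R0 ι τ Λ φ := by
    intro c φ
    simp only [Bop, G0, map_smul, hΛsmul, ContinuousLinearMap.smul_comp,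
      LinearIsometryEquiv.map_smulₛₗ, Complex.conj_conj, smul_add]
  have hBcont : Continuous (Bop R0 ι τ Λ) := by
    have h1 : Continuous fun φ : H => ι (R0 φ) := (ι.comp R0).continuous
    have h2' : Continuous fun φ : H => G0 R0 τ (Λ (τ (R0 φ))) := by
      have hpre : Continuous fun ℓ : X →L[ℂ] ℂ => ℓ.comp C :=
        ((ContinuousLinearMap.compL ℂ H X ℂ).flip C).continuous
      exact ((InnerProductSpace.toDual ℂ H).symm.continuous.comp
        (hpre.comp (hΛcont.comp C.continuous)))
    exact h1.add h2'
  set Blin : H →L[ℂ] H :=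
    { toFun := Bop R0 ι τ Λ
      map_add' := hBadd
      map_smul' := hBsmul
      cont := hBcont } with hBlindef
  have hBlin : ∀ φ : H, Blin φ = Bop R0 ι τ Λ φ := fun _ => rfl
  -- symmetry
  have hBsym : ∀ φ ψ : H, ⟪Bop R0 ι τ Λ φ, ψ⟫_ℂ = ⟪φ, Bop R0 ι τ Λ ψ⟫_ℂ := by
    intro φ ψ
    have e1 : ⟪Bop R0 ι τ Λ φ, ψ⟫_ℂ = ⟪ι (R0 φ), ψ⟫_ℂ + Λ (τ (R0 φ)) (τ (R0 ψ)) := by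
      simp [Bop, inner_add_left, hG0]
    have e2 : ⟪φ, Bop R0 ι τ Λ ψ⟫_ℂ = ⟪φ, ι (R0 ψ)⟫_ℂ + conj (Λ (τ (R0 ψ)) (τ (R0 φ))) := by
      have : ⟪φ, G0 R0 τ (Λ (τ (R0 ψ)))⟫_ℂ = conj (Λ (τ (R0 ψ)) (τ (R0 φ))) := by
        rw [← inner_conj_symm, hG0]
      simp [Bop, inner_add_right, this]
    rw [e1, e2, hTsym, ← hΛsym]
  -- injectivity
  have hker : ∀ φ : H, Bop R0 ι τ Λ φ = 0 → φ = 0 := by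
    intro φ h0
    refine h2 (-(Λ (τ (R0 φ)))) φ fun d => ?_
    obtain ⟨ψ, rfl⟩ := hR0surj d
    have : (0 : ℂ) = ⟪ι (R0 φ), ψ⟫_ℂ + Λ (τ (R0 φ)) (τ (R0 ψ)) := by
      rw [← hG0]
      simpa [Bop, inner_add_left] using (congrArg (fun v => ⟪v, ψ⟫_ℂ) h0).symm
    have h3 : Λ (τ (R0 φ)) (τ (R0 ψ)) = -⟪ι (R0 φ), ψ⟫_ℂ := by linear_combination -this
    simp only [ContinuousLinearMap.neg_apply, h3, neg_neg]
    rw [hTsym]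
  have hinj : Function.Injective (Bop R0 ι τ Λ) := by
    intro a b hab
    have : Bop R0 ι τ Λ (a - b) = 0 := by
      rw [← hBlin, map_sub, hBlin, hBlin, hab, sub_self]
    have := hker _ this
    exact sub_eq_zero.mp this
  -- dense range
  have hdense : Dense (Set.range (Bop R0 ι τ Λ)) := by
    set K : Submodule ℂ H := LinearMap.range (Blin : H →ₗ[ℂ] H) with hKdef
    have hKbot : Kᗮ = ⊥ := by
      rw [Submodule.eq_bot_iff]
      intro ψ hψ
      have hall : ∀ φ : H, ⟪φ, Bop R0 ι τ Λ ψ⟫_ℂ = 0 := by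
        intro φ
        rw [← hBsym]
        exact (Submodule.mem_orthogonal K ψ).1 hψ _ ⟨φ, rfl⟩
      have : Bop R0 ι τ Λ ψ = 0 := by
        have := hall (Bop R0 ι τ Λ ψ)
        rwa [inner_self_eq_zero] at this
      exact hker ψ this
    have : K.topologicalClosure = ⊤ := (Submodule.topologicalClosure_eq_top_iff).2 hKbot
    have hd : Dense (K : Set H) := Submodule.dense_iff_topologicalClosure_eq_top.2 this
    have hEq : (K : Set H) = Set.range (Bop R0 ι τ Λ) := by
      ext x
      simp only [hKdef, SetLike.mem_coe, LinearMap.mem_range, Set.mem_range]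
      rfl
    rwa [hEq] at hd
  refine ⟨hBsym, hinj, hdense, ?_⟩
  -- positivity
  intro hΘpos
  obtain ⟨c₀, hc₀, hApos⟩ := hpos
  -- nonnegativity of the form of B
  have hqnn : ∀ φ : H, 0 ≤ (⟪φ, Bop R0 ι τ Λ φ⟫_ℂ).re := by
    intro φ
    have e2 : ⟪φ, Bop R0 ι τ Λ φ⟫_ℂ
        = ⟪φ, ι (R0 φ)⟫_ℂ + conj (Λ (τ (R0 φ)) (τ (R0 φ))) := by
      have : ⟪φ, G0 R0 τ (Λ (τ (R0 φ)))⟫_ℂ = conj (Λ (τ (R0 φ)) (τ (R0 φ))) := by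
        rw [← inner_conj_symm, hG0]
      simp [Bop, inner_add_right, this]
    have hA : 0 ≤ (⟪φ, ι (R0 φ)⟫_ℂ).re := by
      have h1 := hApos φ
      have h2' : (0:ℝ) ≤ c₀ * ‖ι (R0 φ)‖ ^ 2 := by positivity
      have h3 : (⟪φ, ι (R0 φ)⟫_ℂ).re = (⟪ι (R0 φ), φ⟫_ℂ).re := by
        rw [show ⟪φ, ι (R0 φ)⟫_ℂ = conj ⟪ι (R0 φ), φ⟫_ℂ from (inner_conj_symm _ _).symm,
          Complex.conj_re]
      rw [h3]; linarith
    have hΘ' : 0 ≤ (conj (Λ (τ (R0 φ)) (τ (R0 φ)))).re := by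
      have : Λ (τ (R0 φ)) (τ (R0 φ)) = Λ (τ (R0 φ)) (Θ (Λ (τ (R0 φ)))) := by
        rw [hΛright]
      rw [this, Complex.conj_re]
      exact hΘpos _
    rw [e2]
    simpa using add_nonneg hA hΘ'
  obtain ⟨M, hMge, hM⟩ : ∃ M : ℝ, ‖Blin‖ ≤ M ∧ 0 < M :=
    ⟨‖Blin‖ + 1, by linarith [norm_nonneg Blin], by positivity⟩
  refine ⟨1 / M, one_div_pos.mpr hM, fun φ => ?_⟩
  set u : H := Bop R0 ι τ Λ φ with hu
  -- expand ⟪φ - t•u, B(φ - t•u)⟫ with t = 1/M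
  set t : ℝ := 1 / M with ht
  have ht0 : 0 < t := by rw [ht]; exact one_div_pos.mpr hM
  have hBu : Bop R0 ι τ Λ ((t:ℂ) • u) = (t:ℂ) • Bop R0 ι τ Λ u := hBsmul _ _
  have hexp : (⟪φ - (t:ℂ) • u, Bop R0 ι τ Λ (φ - (t:ℂ) • u)⟫_ℂ).re
      = (⟪φ, u⟫_ℂ).re - 2 * t * ‖u‖ ^ 2 + t ^ 2 * (⟪u, Bop R0 ι τ Λ u⟫_ℂ).re := by
    have hmap : Bop R0 ι τ Λ (φ - (t:ℂ) • u) = u - (t:ℂ) • Bop R0 ι τ Λ u := by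
      rw [← hBlin, map_sub, map_smul, hBlin, hBlin, ← hu]
    rw [hmap, inner_sub_left, inner_sub_right, inner_sub_right,
      inner_smul_left, inner_smul_right, inner_smul_left, inner_smul_right]
    have h1 : ⟪φ, Bop R0 ι τ Λ u⟫_ℂ = ⟪u, u⟫_ℂ := by rw [← hBsym, ← hu]
    have h2' : ⟪u, u⟫_ℂ = (‖u‖ ^ 2 : ℝ) := by
      rw [inner_self_eq_norm_sq_to_K]; norm_num
    rw [h1, h2']
    simp only [Complex.sub_re, Complex.add_re, Complex.mul_re, Complex.conj_re,
      Complex.conj_im, Complex.ofReal_re, Complex.ofReal_im]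
    ring
  have hnn := hqnn (φ - (t:ℂ) • u)
  rw [hexp] at hnn
  have hbound : (⟪u, Bop R0 ι τ Λ u⟫_ℂ).re ≤ M * ‖u‖ ^ 2 := by
    have h1 : (⟪u, Bop R0 ι τ Λ u⟫_ℂ).re ≤ ‖⟪u, Bop R0 ι τ Λ u⟫_ℂ‖ :=
      Complex.re_le_norm _
    have h2' : ‖⟪u, Bop R0 ι τ Λ u⟫_ℂ‖ ≤ ‖u‖ * ‖Bop R0 ι τ Λ u‖ := norm_inner_le_norm _ _
    have h3 : ‖Bop R0 ι τ Λ u‖ ≤ M * ‖u‖ := by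
      have h4 := Blin.le_opNorm u
      rw [hBlin] at h4
      exact h4.trans (mul_le_mul_of_nonneg_right hMge (norm_nonneg u))
    calc (⟪u, Bop R0 ι τ Λ u⟫_ℂ).re ≤ ‖u‖ * ‖Bop R0 ι τ Λ u‖ := h1.trans h2'
    _ ≤ ‖u‖ * (M * ‖u‖) := mul_le_mul_of_nonneg_left h3 (norm_nonneg u)
    _ = M * ‖u‖ ^ 2 := by ring
  have htM : t * M = 1 := by rw [ht]; field_simp
  have e1 : t ^ 2 * (⟪u, Bop R0 ι τ Λ u⟫_ℂ).re ≤ t ^ 2 * (M * ‖u‖ ^ 2) :=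
    mul_le_mul_of_nonneg_left hbound (sq_nonneg t)
  have e2 : t ^ 2 * (M * ‖u‖ ^ 2) = t * ‖u‖ ^ 2 := by
    linear_combination (t * ‖u‖ ^ 2) * htM
  rw [ht] at e1 e2 ⊢
  linarith [hnn, e1, e2]
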